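/- There exist a finite set G ⊂ ℝ² on which π_{-1} is injective and a non-uniform probability measure P on G with H(P)/max(H(π₀P),H(π₁P),H(π_∞P)) > H(U)/max(H(π₀U),H(π₁U),H(π_∞U)) for U the uniform measure on the same G. -/

import Mathlib

open Finset
open scoped Classical

noncomputable def pushEnt (G : Finset (ℝ × ℝ)) (P : ℝ × ℝ → ℝ) (π : ℝ × ℝ → ℝ) : ℝ :=
  -∑ ν ∈ G.image π, (∑ g ∈ G.filter (fun g => π g = ν), P g) *
      Real.log (∑ g ∈ G.filter (fun g => π g = ν), P g)

noncomputable def ent (G : Finset (ℝ × ℝ)) (P : ℝ × ℝ → ℝ) : ℝ :=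
  -∑ g ∈ G, P g * Real.log (P g)

def π₀ : ℝ × ℝ → ℝ := fun x => x.1
def π₁ : ℝ × ℝ → ℝ := fun x => x.1 + x.2
def π₂ : ℝ × ℝ → ℝ := fun x => x.1 + 2 * x.2
def πinf : ℝ × ℝ → ℝ := fun x => x.2

/-!
Put mass `t` on `(0,1)` and `(2,0)` and mass `1/2 - t` on `(1,0)` and `(1,1)`; `t = 1/4` is the
uniform measure. Every fibre of `π₁` and of `π_∞` contains one point of each kind, so both
push-forwards have entropy `log 2` whatever `t` is, while the fibres of `π₀` have masses
`t, 1 - 2t, t`. At `t = 1/4` the ratio is `2 log 2 / (3/2 log 2) = 4/3`. At `t = 1/10` the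
`π₀`-entropy `log 5 - 7/5 log 2` falls below `log 2` (as `5^5 < 2^12`), and the ratio becomes
`log 5 / log 2 - 3/5 > 4/3` (as `2^29 < 5^15`).
-/

open Real

lemma ent_eq_sum_negMulLog (G : Finset (ℝ × ℝ)) (P : ℝ × ℝ → ℝ) :
    ent G P = ∑ g ∈ G, negMulLog (P g) := by
  simp only [ent, negMulLog, neg_mul, sum_neg_distrib]

lemma pushEnt_eq_sum_negMulLog (G : Finset (ℝ × ℝ)) (P : ℝ × ℝ → ℝ) (p : ℝ × ℝ → ℝ) :
    pushEnt G P p =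
      ∑ ν ∈ G.image p, negMulLog (∑ g ∈ G, if p g = ν then P g else 0) := by
  simp only [pushEnt, negMulLog, neg_mul, sum_neg_distrib, sum_filter]

lemma negMulLog_one_div (x : ℝ) : negMulLog (1 / x) = log x / x := by
  rw [negMulLog, one_div, log_inv]
  ring

noncomputable def entropyRatio (G : Finset (ℝ × ℝ)) (P : ℝ × ℝ → ℝ) : ℝ :=
  ent G P / max (max (pushEnt G P π₀) (pushEnt G P π₁)) (pushEnt G P πinf)

lemma mul_log_lt_mul_log_of_pow_lt {a b : ℝ} {m n : ℕ} (ha : 0 < a) (h : a ^ m < b ^ n) :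
    m * log a < n * log b := by
  rw [← log_pow, ← log_pow]
  exact log_lt_log (pow_pos ha m) h

noncomputable def witnessSet : Finset (ℝ × ℝ) := {(0, 1), (1, 0), (1, 1), (2, 0)}

noncomputable def witnessMass (t : ℝ) : ℝ × ℝ → ℝ :=
  fun g => if g.1 = 1 then 1 / 2 - t else t

lemma sum_witnessSet (f : ℝ × ℝ → ℝ) :
    ∑ g ∈ witnessSet, f g = f (0, 1) + f (1, 0) + f (1, 1) + f (2, 0) := by
  rw [witnessSet, sum_insert (by norm_num), sum_insert (by norm_num), sum_insert (by norm_num),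
    sum_singleton, add_assoc, add_assoc]

lemma card_witnessSet : witnessSet.card = 4 := by
  simp [witnessSet, Prod.ext_iff]

lemma injOn_sub_witnessSet :
    Set.InjOn (fun x : ℝ × ℝ => x.1 - x.2) (witnessSet : Set (ℝ × ℝ)) := by
  rintro ⟨a, b⟩ hx ⟨c, d⟩ hy h
  simp only [witnessSet, coe_insert, Set.mem_insert_iff, coe_singleton,
    Set.mem_singleton_iff, Prod.mk.injEq] at hx hy
  obtain ⟨rfl, rfl⟩ | ⟨rfl, rfl⟩ | ⟨rfl, rfl⟩ | ⟨rfl, rfl⟩ := hx <;>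
    obtain ⟨rfl, rfl⟩ | ⟨rfl, rfl⟩ | ⟨rfl, rfl⟩ | ⟨rfl, rfl⟩ := hy <;>
    norm_num at h <;> norm_num

lemma witnessMass_nonneg {t : ℝ} (h₀ : 0 ≤ t) (h₁ : t ≤ 1 / 2) (g : ℝ × ℝ) :
    0 ≤ witnessMass t g := by
  unfold witnessMass
  split_ifs <;> linarith

lemma sum_witnessMass (t : ℝ) : ∑ g ∈ witnessSet, witnessMass t g = 1 := by
  simp only [sum_witnessSet, witnessMass]
  norm_num
  ring

lemma ent_witnessMass (t : ℝ) :
    ent witnessSet (witnessMass t) = 2 * negMulLog t + 2 * negMulLog (1 / 2 - t) := by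
  simp only [ent_eq_sum_negMulLog, sum_witnessSet, witnessMass]
  norm_num
  ring

lemma pushEnt_π₀_witnessMass (t : ℝ) :
    pushEnt witnessSet (witnessMass t) π₀ = 2 * negMulLog t + negMulLog (1 - 2 * t) := by
  have : witnessSet.image π₀ = {0, 1, 2} := by
    ext x; simp [witnessSet, π₀]
  simp only [pushEnt_eq_sum_negMulLog, this, sum_witnessSet, witnessMass, π₀]
  norm_num
  ring_nf

lemma pushEnt_π₁_witnessMass (t : ℝ) : pushEnt witnessSet (witnessMass t) π₁ = log 2 := by
  have : witnessSet.image π₁ = {1, 2} := by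
    ext x; simp [witnessSet, π₁]; norm_num
  norm_num [pushEnt_eq_sum_negMulLog, this, sum_witnessSet, witnessMass, π₁, negMulLog_one_div]

lemma pushEnt_πinf_witnessMass (t : ℝ) : pushEnt witnessSet (witnessMass t) πinf = log 2 := by
  have : witnessSet.image πinf = {1, 0} := by
    ext x; simp [witnessSet, πinf]
  norm_num [pushEnt_eq_sum_negMulLog, this, sum_witnessSet, witnessMass, πinf, negMulLog_one_div]

lemma witnessMass_quarter : witnessMass (1 / 4) = fun _ => 1 / 4 := by
  funext g; simp only [witnessMass]; norm_num

lemma entropyRatio_uniform : entropyRatio witnessSet (fun _ => 1 / 4) = 4 / 3 := by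
  have h2 : 0 < log 2 := log_pos one_lt_two
  have h4 : log 4 = 2 * log 2 := by
    rw [show (4 : ℝ) = 2 ^ 2 by norm_num, log_pow]; norm_num
  rw [entropyRatio, ← witnessMass_quarter, ent_witnessMass, pushEnt_π₀_witnessMass,
    pushEnt_π₁_witnessMass, pushEnt_πinf_witnessMass]
  norm_num [negMulLog_one_div, h4]
  rw [max_eq_left (by linarith)]
  field_simp
  ring

lemma entropyRatio_witness :
    entropyRatio witnessSet (witnessMass (1 / 10)) = log 5 / log 2 - 3 / 5 := by
  have h2 : 0 < log 2 := log_pos one_lt_two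
  have h5 : (5 : ℝ) ≠ 0 := by norm_num
  have hent : ent witnessSet (witnessMass (1 / 10)) = log 5 - 3 / 5 * log 2 := by
    rw [ent_witnessMass, show (1 / 10 : ℝ) = (2 * 5)⁻¹ by norm_num,
      show (1 / 2 - (2 * 5)⁻¹ : ℝ) = 2 * 5⁻¹ by norm_num]
    simp only [negMulLog, log_inv, log_mul two_ne_zero h5, log_mul two_ne_zero (inv_ne_zero h5)]
    ring
  have hπ₀ : pushEnt witnessSet (witnessMass (1 / 10)) π₀ = log 5 - 7 / 5 * log 2 := by
    rw [pushEnt_π₀_witnessMass, show (1 / 10 : ℝ) = (2 * 5)⁻¹ by norm_num,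
      show (1 - 2 * (2 * 5)⁻¹ : ℝ) = 2 ^ 2 * 5⁻¹ by norm_num]
    simp only [negMulLog, log_inv, log_pow, log_mul two_ne_zero h5,
      log_mul (pow_ne_zero 2 two_ne_zero) (inv_ne_zero h5)]
    ring
  have hlog5 : 5 * log 5 < 12 * log 2 := by
    exact_mod_cast mul_log_lt_mul_log_of_pow_lt (m := 5) (n := 12) (by norm_num : (0 : ℝ) < 5)
      (by norm_num)
  have hle : log 5 - 7 / 5 * log 2 ≤ log 2 := by linarith
  rw [entropyRatio, hent, hπ₀, pushEnt_π₁_witnessMass, pushEnt_πinf_witnessMass,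
    max_eq_right hle, max_self]
  field_simp

theorem nonuniform_beats_uniform :
    ∃ (G : Finset (ℝ × ℝ)) (P : ℝ × ℝ → ℝ),
      Set.InjOn (fun x : ℝ × ℝ => x.1 - x.2) (G : Set (ℝ × ℝ)) ∧
      (∀ g ∈ G, 0 ≤ P g) ∧ (∑ g ∈ G, P g = 1) ∧
      (¬ ∀ g ∈ G, P g = 1 / G.card) ∧
      ent G P / max (max (pushEnt G P π₀) (pushEnt G P π₁)) (pushEnt G P πinf)
        > ent G (fun _ => 1 / G.card) /
            max (max (pushEnt G (fun _ => 1 / G.card) π₀)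
              (pushEnt G (fun _ => 1 / G.card) π₁))
              (pushEnt G (fun _ => 1 / G.card) πinf) := by
  refine ⟨witnessSet, witnessMass (1 / 10), injOn_sub_witnessSet,
    fun g _ => witnessMass_nonneg (by norm_num) (by norm_num) g, sum_witnessMass _, ?_, ?_⟩
  · intro h
    have := h (0, 1) (by simp [witnessSet])
    norm_num [witnessMass, card_witnessSet] at this
  · simp only [card_witnessSet, Nat.cast_ofNat]
    change entropyRatio _ _ > entropyRatio _ _
    have h2 : 0 < log 2 := log_pos one_lt_two
    have h29 : 29 * log 2 < 15 * log 5 := by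
      exact_mod_cast mul_log_lt_mul_log_of_pow_lt (m := 29) (n := 15) (by norm_num : (0 : ℝ) < 2)
        (by norm_num)
    rw [entropyRatio_witness, entropyRatio_uniform, gt_iff_lt, lt_sub_iff_add_lt, lt_div_iff₀ h2]
    linarith
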